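/- checkAS correctness: Let P be a ground propositional normal program and M an interpretation over its head atoms. The stratified program checkAS(P, M) — which encodes M as facts over a fresh negative signature, encodes the Gelfond–Lifschitz reduct of P with respect to M over a fresh positive signature, derives fail_M whenever the positive and negative signatures disagree on some head atom, and derives as_M :- not fail_M — derives the atom as_M in its unique answer set extended with any fixed interpretation of the non-head atoms X if and only if M ∪ X restricted appropriately is an answer set of P ∪ fix(X), i.e., as_M holds iff M is (the head-atom part of) an answer set of P under input X. -/

import Mathlib

open Classical

/-- A propositional normal rule: optional head (none = constraint),
positive body atoms and (default-)negated body atoms. -/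
structure ARule (α : Type) where
  head : Option α
  pos : Set α
  neg : Set α

/-- A propositional normal logic program. -/
abbrev AProgram (α : Type) := Set (ARule α)

namespace ASP

variable {α : Type}

def ARule.headSet (r : ARule α) : Set α := {a | r.head = some a}

def ARule.atoms (r : ARule α) : Set α := ARule.headSet r ∪ r.pos ∪ r.neg

def progAtoms (P : AProgram α) : Set α := ⋃ r ∈ P, ARule.atoms r

def heads (P : AProgram α) : Set α := {a | ∃ r ∈ P, r.head = some a}

/-- The body of a rule is true in interpretation `I`. -/
def bodyTrue (I : Set α) (r : ARule α) : Prop :=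
  r.pos ⊆ I ∧ ∀ a ∈ r.neg, a ∉ I

/-- `I` satisfies rule `r`. -/
def satRule (I : Set α) (r : ARule α) : Prop :=
  bodyTrue I r → ∃ h, r.head = some h ∧ h ∈ I

def isModel (I : Set α) (P : AProgram α) : Prop := ∀ r ∈ P, satRule I r

/-- Gelfond–Lifschitz reduct of `P` with respect to `I`. -/
def reduct (P : AProgram α) (I : Set α) : AProgram α :=
  {r' | ∃ r ∈ P, (∀ a ∈ r.neg, a ∉ I) ∧ r' = ⟨r.head, r.pos, ∅⟩}

/-- `I` is an answer set of `P`: a minimal model of the reduct `P^I`. -/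
def isAnswerSet (P : AProgram α) (I : Set α) : Prop :=
  isModel I (reduct P I) ∧ ∀ J, J ⊂ I → ¬ isModel J (reduct P I)

/-- A program is coherent if it has an answer set. -/
def coherent (P : AProgram α) : Prop := ∃ I, isAnswerSet P I

/-- `fix B M`: facts for atoms of `M` and constraints for atoms of `B \ M`. -/
def fixProg (B M : Set α) : AProgram α :=
  {r | (∃ a ∈ M, r = ⟨some a, ∅, ∅⟩) ∨ (∃ a ∈ B \ M, r = ⟨none, {a}, ∅⟩)}

/-- A ground weak constraint `:~ pos, not neg [weight@level]`. -/
structure WeakC (α : Type) where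
  pos : Set α
  neg : Set α
  weight : ℤ
  level : ℤ

def WeakC.atoms (w : WeakC α) : Set α := w.pos ∪ w.neg

/-- The body of a weak constraint is true in `I` (the weak constraint is violated). -/
def WeakC.violated (w : WeakC α) (I : Set α) : Prop :=
  w.pos ⊆ I ∧ ∀ a ∈ w.neg, a ∉ I

/-- Cost of interpretation `I` at level `l` for weak constraints `W`. -/
noncomputable def cost (W : Finset (WeakC α)) (I : Set α) (l : ℤ) : ℤ :=
  ∑ w ∈ W.filter (fun w => w.level = l ∧ WeakC.violated w I), w.weight

/-- `I` is dominated by `J` with respect to the weak constraints `W`. -/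
def dominated (W : Finset (WeakC α)) (I J : Set α) : Prop :=
  ∃ l, cost W I l > cost W J l ∧ ∀ l' > l, cost W I l' = cost W J l'

/-- `M` is an optimal answer set of program `P` with weak constraints `W`. -/
def optAS (P : AProgram α) (W : Finset (WeakC α)) (M : Set α) : Prop :=
  isAnswerSet P M ∧ ∀ M', isAnswerSet P M' → ¬ dominated W M M'

/-- `sat(P)`: add `not s` to each rule body, plus a choice on the fresh atom `s`
 (rules `s :- not n` and `n :- not s`). -/
def satProg (s n : α) (P : AProgram α) : AProgram α :=
  ((fun r : ARule α => ARule.mk r.head r.pos (insert s r.neg)) '' P) ∪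
    {⟨some s, ∅, {n}⟩, ⟨some n, ∅, {s}⟩}

/-- Complement `¬P` of a program with constraints: each constraint `:- B` becomes
 `v :- B`, and the constraint `:- not v` is added. -/
def complProg (v : α) (P : AProgram α) : AProgram α :=
  {r | r ∈ P ∧ r.head ≠ none} ∪
    {r' | ∃ r ∈ P, r.head = none ∧ r' = ⟨some v, r.pos, r.neg⟩} ∪
    {⟨none, ∅, {v}⟩}

/-- Rules of `relaxed(P,l)`: keep rules with heads, turn each constraint `:- B`
into `unsat :- B`. -/
def relaxedRules (u : α) (P : AProgram α) : AProgram α :=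
  {r | r ∈ P ∧ r.head ≠ none} ∪
    {r' | ∃ r ∈ P, r.head = none ∧ r' = ⟨some u, r.pos, r.neg⟩}

/-- The weak constraint `:~ unsat [1@l]` of `relaxed(P,l)`. -/
def relaxWeak (u : α) (l : ℤ) : WeakC α := ⟨{u}, ∅, 1, l⟩

/-- A stratification: positive dependencies do not increase the level,
negative dependencies strictly decrease it. -/
def IsStratification (P : AProgram α) (lv : α → ℕ) : Prop :=
  ∀ r ∈ P, ∀ h, r.head = some h →
    (∀ a ∈ r.pos, lv a ≤ lv h) ∧ (∀ a ∈ r.neg, lv a < lv h)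

def Stratified (P : AProgram α) : Prop := ∃ lv, IsStratification P lv

/-- `M` (an answer set of a program with atom base `B`) satisfies the constraint
program `C` iff `C ∪ fix_B(M)` is coherent. -/
def satisfiesC (C : AProgram α) (B M : Set α) : Prop := coherent (C ∪ fixProg B M)

end ASP

open ASP

/-- Map head atoms of `P` to a fresh signature via `f`, leaving other atoms
unchanged. -/
noncomputable def sigMap {α : Type} (P : AProgram α) (f : α → α) : α → α :=
  fun a => if a ∈ heads P then f a else a

/-- The `checkAS(P, M)` program: `M` is encoded as facts over the negative
signature `ns`, the GL-reduct of `P` w.r.t. `M` is simulated over the positive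
signature `ps` (constraints derive `failA`), `failA` is derived when the two
signatures disagree on a head atom, and `asA :- not failA`. -/
noncomputable def checkAS {α : Type} (P : AProgram α) (ps ns : α → α)
    (failA asA : α) (M : Set α) : AProgram α :=
  {r | ∃ p ∈ M, r = ⟨some (ns p), ∅, ∅⟩} ∪
  {r' | ∃ r ∈ P, r.head ≠ none ∧
    r' = ⟨r.head.map (sigMap P ps), sigMap P ps '' r.pos, sigMap P ns '' r.neg⟩} ∪
  {r' | ∃ r ∈ P, r.head = none ∧
    r' = ⟨some failA, sigMap P ps '' r.pos, sigMap P ns '' r.neg⟩} ∪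
  {r' | ∃ p ∈ heads P,
    r' = ⟨some failA, {ps p}, {ns p}⟩ ∨ r' = ⟨some failA, {ns p}, {ps p}⟩} ∪
  {⟨some asA, ∅, {failA}⟩}

/-!
In an answer set `N` of `checkAS(P, M) ∪ fix(X)` the only support for a negative copy or for
an atom of `P` that is no head is a fact, so `N` reads `M` off the negative signature and `X`
off the atoms of `P`. The translated rules of `P` therefore fire in `N` exactly when the rules
of the reduct `P^(M ∪ X)` fire on `T ∪ X`, where `T` is read off the positive signature, and an
unfounded-set argument makes `T ∪ X` the least set closed under that reduct. An answer set is
the least closed set of its reduct that satisfies the constraints, so `M ∪ X` is one exactly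
when `T = M` and no constraint of `P` fires, that is, when `fail_M` cannot be derived and
`as_M` is.
-/

namespace ASP

variable {α : Type} {P : AProgram α} {I K L N U : Set α} {r : ARule α} {a : α}

def ReductClosed (P : AProgram α) (I K : Set α) : Prop :=
  ∀ r ∈ P, (∀ b ∈ r.neg, b ∉ I) → r.pos ⊆ K → ∀ h, r.head = some h → h ∈ K

def ConstraintsHold (P : AProgram α) (I : Set α) : Prop :=
  ∀ r ∈ P, r.head = none → ¬ bodyTrue I r

/-- Unfounded sets in the sense of Van Gelder, Ross and Schlipf: no rule whose body holds
in `I` derives an atom of `U` without using an atom of `U`. -/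
def IsUnfounded (P : AProgram α) (I U : Set α) : Prop :=
  ∀ r ∈ P, ∀ a ∈ U, r.head = some a → (∀ b ∈ r.neg, b ∉ I) → ¬ r.pos ⊆ I \ U

theorem isModel_reduct_iff : isModel K (reduct P I) ↔
    ∀ r ∈ P, (∀ b ∈ r.neg, b ∉ I) → r.pos ⊆ K → ∃ h, r.head = some h ∧ h ∈ K := by
  refine ⟨fun hK r hr hneg hpos => hK ⟨r.head, r.pos, ∅⟩ ⟨r, hr, hneg, rfl⟩ ⟨hpos, by simp⟩, ?_⟩
  rintro hK _ ⟨r, hr, hneg, rfl⟩ ⟨hpos, -⟩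
  exact hK r hr hneg hpos

theorem isModel.reductClosed (hK : isModel K (reduct P I)) : ReductClosed P I K := by
  intro r hr hneg hpos h hh
  obtain ⟨h', hh', hh'K⟩ := isModel_reduct_iff.1 hK r hr hneg hpos
  rw [hh, Option.some_inj] at hh'
  exact hh' ▸ hh'K

theorem isModel.constraintsHold (hI : isModel I (reduct P I)) : ConstraintsHold P I := by
  intro r hr hnone ⟨hpos, hneg⟩
  obtain ⟨h, hh, -⟩ := isModel_reduct_iff.1 hI r hr hneg hpos
  simp [hnone] at hh

theorem isModel_reduct_of_subset (hK : ReductClosed P I K) (hC : ConstraintsHold P I)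
    (hKI : K ⊆ I) : isModel K (reduct P I) := by
  refine isModel_reduct_iff.2 fun r hr hneg hpos => ?_
  cases hh : r.head with
  | none => exact absurd ⟨hpos.trans hKI, hneg⟩ (hC r hr hh)
  | some h => exact ⟨h, rfl, hK r hr hneg hpos h hh⟩

/-- A closed subset of `I` is a model of `P^I` once `I` satisfies the constraints, so minimality
among models becomes leastness among closed sets. -/
theorem isAnswerSet_iff_of_isLeast (hL : IsLeast {K | ReductClosed P I K} L) :
    isAnswerSet P I ↔ I = L ∧ ConstraintsHold P I := by
  constructor
  · intro hI
    have hC := hI.1.constraintsHold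
    have hLI : L ⊆ I := hL.2 hI.1.reductClosed
    refine ⟨eq_of_le_of_not_lt' hLI fun hLI' => hI.2 L hLI' ?_, hC⟩
    exact isModel_reduct_of_subset hL.1 hC hLI
  · rintro ⟨rfl, hC⟩
    refine ⟨isModel_reduct_of_subset hL.1 hC le_rfl, fun J hJ hJmod => ?_⟩
    exact hJ.2 (hL.2 hJmod.reductClosed)

theorem isAnswerSet.mem_of_bodyTrue (hN : isAnswerSet P N) (hr : r ∈ P) (hh : r.head = some a)
    (hb : bodyTrue N r) : a ∈ N :=
  hN.1.reductClosed r hr hb.2 hb.1 a hh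

theorem isAnswerSet.disjoint_of_isUnfounded (hN : isAnswerSet P N) (hU : IsUnfounded P N U) :
    Disjoint N U := by
  have hclosed : ReductClosed P N (N \ U) := fun r hr hneg hpos h hh =>
    ⟨hN.1.reductClosed r hr hneg (hpos.trans Set.sdiff_subset) h hh,
      fun hhU => hU r hr h hhU hh hneg hpos⟩
  have hmod := isModel_reduct_of_subset hclosed hN.1.constraintsHold Set.sdiff_subset
  rw [← sdiff_eq_left]
  exact eq_of_le_of_not_lt Set.sdiff_subset fun hlt => hN.2 _ hlt hmod

theorem isAnswerSet.exists_bodyTrue_of_mem (hN : isAnswerSet P N) (ha : a ∈ N) :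
    ∃ r ∈ P, r.head = some a ∧ bodyTrue N r := by
  let U := {a | ¬ ∃ r ∈ P, r.head = some a ∧ bodyTrue N r}
  have hU : IsUnfounded P N U := fun r hr _ ha hh hneg hpos =>
    ha ⟨r, hr, hh, hpos.trans Set.sdiff_subset, hneg⟩
  by_contra h
  exact Set.disjoint_left.1 (hN.disjoint_of_isUnfounded hU) ha h

theorem mem_progAtoms_of_mem_pos (hr : r ∈ P) (ha : a ∈ r.pos) : a ∈ progAtoms P :=
  Set.mem_biUnion hr (Or.inl (Or.inr ha))

theorem mem_progAtoms_of_mem_neg (hr : r ∈ P) (ha : a ∈ r.neg) : a ∈ progAtoms P :=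
  Set.mem_biUnion hr (Or.inr ha)

theorem constraintsHold_union_fixProg {B X : Set α} (hI : ∀ a ∈ B \ X, a ∉ I) :
    ConstraintsHold (P ∪ fixProg B X) I ↔ ConstraintsHold P I := by
  refine ⟨fun h r hr => h r (Or.inl hr), fun h r hr hnone hbody => ?_⟩
  rcases hr with hr | ⟨a, -, rfl⟩ | ⟨a, ha, rfl⟩
  · exact h r hr hnone hbody
  · cases hnone
  · exact hI a ha (hbody.1 rfl)

end ASP

theorem sigMap_of_mem {α : Type} {P : AProgram α} {f : α → α} {a : α} (ha : a ∈ heads P) :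
    sigMap P f a = f a :=
  if_pos ha

theorem sigMap_of_not_mem {α : Type} {P : AProgram α} {f : α → α} {a : α} (ha : a ∉ heads P) :
    sigMap P f a = a :=
  if_neg ha

namespace checkAS

variable {α : Type} {P : AProgram α} {ps ns : α → α} {failA asA : α} {M X N K : Set α}
  {r s : ARule α} {a b p : α}

structure FreshSignatures (P : AProgram α) (ps ns : α → α) (failA asA : α) : Prop where
  injOn_ps : Set.InjOn ps (heads P)
  injOn_ns : Set.InjOn ns (heads P)
  ps_not_mem : ∀ p ∈ heads P, ps p ∉ progAtoms P
  ns_not_mem : ∀ p ∈ heads P, ns p ∉ progAtoms P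
  ps_ne_fail : ∀ p ∈ heads P, ps p ≠ failA
  ps_ne_as : ∀ p ∈ heads P, ps p ≠ asA
  ns_ne_fail : ∀ p ∈ heads P, ns p ≠ failA
  ns_ne_as : ∀ p ∈ heads P, ns p ≠ asA
  ps_ne_ns : ∀ p ∈ heads P, ∀ q ∈ heads P, ps p ≠ ns q
  fail_not_mem : failA ∉ progAtoms P
  as_not_mem : asA ∉ progAtoms P
  fail_ne_as : failA ≠ asA

/-- Rules are put into this program by `Or.inl`/`Or.inr` through the left-nested unions of
`checkAS`, followed by `fixProg`. -/
noncomputable def checkASInput (P : AProgram α) (ps ns : α → α) (failA asA : α)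
    (M X : Set α) : AProgram α :=
  checkAS P ps ns failA asA M ∪ fixProg (progAtoms P \ heads P) X

def decodePos (P : AProgram α) (ps : α → α) (N : Set α) : Set α := {p ∈ heads P | ps p ∈ N}

theorem head_cases_of_mem_checkASInput (hr : r ∈ checkASInput P ps ns failA asA M X)
    (hh : r.head = some b) :
    (∃ p ∈ M, b = ns p) ∨
    (∃ s ∈ P, ∃ h ∈ heads P, s.head = some h ∧ b = ps h ∧
      r = ⟨some (ps h), sigMap P ps '' s.pos, sigMap P ns '' s.neg⟩) ∨
    (b = failA ∧
      ((∃ s ∈ P, s.head = none ∧ r = ⟨some failA, sigMap P ps '' s.pos, sigMap P ns '' s.neg⟩) ∨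
        ∃ p ∈ heads P, r = ⟨some failA, {ps p}, {ns p}⟩ ∨ r = ⟨some failA, {ns p}, {ps p}⟩)) ∨
    (b = asA ∧ r = ⟨some asA, ∅, {failA}⟩) ∨
    b ∈ X := by
  rcases hr with ((((⟨p, hp, rfl⟩ | ⟨s, hs, -, rfl⟩) | ⟨s, hs, hnone, rfl⟩) | ⟨p, hp, hpr⟩) | rfl) |
    ⟨a, ha, rfl⟩ | ⟨a, -, rfl⟩
  · exact Or.inl ⟨p, hp, (Option.some_inj.1 hh).symm⟩
  · obtain ⟨h, hsh, rfl⟩ := Option.map_eq_some_iff.1 hh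
    have hH : h ∈ heads P := ⟨s, hs, hsh⟩
    refine Or.inr (Or.inl ⟨s, hs, h, hH, hsh, sigMap_of_mem hH, ?_⟩)
    simp [hsh, sigMap_of_mem hH]
  · exact Or.inr (Or.inr (Or.inl ⟨(Option.some_inj.1 hh).symm, Or.inl ⟨s, hs, hnone, rfl⟩⟩))
  · refine Or.inr (Or.inr (Or.inl ⟨?_, Or.inr ⟨p, hp, hpr⟩⟩))
    rcases hpr with rfl | rfl <;> exact (Option.some_inj.1 hh).symm
  · exact Or.inr (Or.inr (Or.inr (Or.inl ⟨(Option.some_inj.1 hh).symm, rfl⟩)))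
  · exact Or.inr (Or.inr (Or.inr (Or.inr ((Option.some_inj.1 hh) ▸ ha))))
  · cases hh

theorem mem_iff_mem_of_mem_progAtoms (hF : FreshSignatures P ps ns failA asA) (hM : M ⊆ heads P)
    (hN : isAnswerSet (checkASInput P ps ns failA asA M X) N) (ha : a ∈ progAtoms P) :
    a ∈ N ↔ a ∈ X := by
  refine ⟨fun haN => ?_, fun haX => hN.mem_of_bodyTrue (Or.inr (Or.inl ⟨a, haX, rfl⟩)) rfl
    ⟨Set.empty_subset _, by simp⟩⟩
  obtain ⟨r, hr, hh, -⟩ := hN.exists_bodyTrue_of_mem haN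
  rcases head_cases_of_mem_checkASInput hr hh with
    ⟨p, hp, rfl⟩ | ⟨s, -, h, hH, -, rfl, -⟩ | ⟨rfl, -⟩ | ⟨rfl, -⟩ | haX
  · exact absurd ha (hF.ns_not_mem p (hM hp))
  · exact absurd ha (hF.ps_not_mem h hH)
  · exact absurd ha hF.fail_not_mem
  · exact absurd ha hF.as_not_mem
  · exact haX

theorem ns_mem_iff (hF : FreshSignatures P ps ns failA asA) (hM : M ⊆ heads P)
    (hX : X ⊆ progAtoms P \ heads P) (hN : isAnswerSet (checkASInput P ps ns failA asA M X) N)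
    (hp : p ∈ heads P) : ns p ∈ N ↔ p ∈ M := by
  refine ⟨fun hpN => ?_, fun hpM => hN.mem_of_bodyTrue
    (Or.inl (Or.inl (Or.inl (Or.inl (Or.inl ⟨p, hpM, rfl⟩))))) rfl ⟨Set.empty_subset _, by simp⟩⟩
  obtain ⟨r, hr, hh, -⟩ := hN.exists_bodyTrue_of_mem hpN
  rcases head_cases_of_mem_checkASInput hr hh with
    ⟨q, hq, hpq⟩ | ⟨s, -, h, hH, -, hph, -⟩ | ⟨hp', -⟩ | ⟨hp', -⟩ | hpX
  · exact hF.injOn_ns hp (hM hq) hpq ▸ hq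
  · exact absurd hph.symm (hF.ps_ne_ns h hH p hp)
  · exact absurd hp' (hF.ns_ne_fail p hp)
  · exact absurd hp' (hF.ns_ne_as p hp)
  · exact absurd (hX hpX).1 (hF.ns_not_mem p hp)

theorem as_mem_iff (hF : FreshSignatures P ps ns failA asA) (hM : M ⊆ heads P)
    (hX : X ⊆ progAtoms P \ heads P) (hN : isAnswerSet (checkASInput P ps ns failA asA M X) N) :
    asA ∈ N ↔ failA ∉ N := by
  refine ⟨fun haN => ?_, fun hf => hN.mem_of_bodyTrue (Or.inl (Or.inr rfl)) rfl
    ⟨Set.empty_subset _, by simpa using hf⟩⟩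
  obtain ⟨r, hr, hh, -, hneg⟩ := hN.exists_bodyTrue_of_mem haN
  rcases head_cases_of_mem_checkASInput hr hh with
    ⟨p, hp, hpa⟩ | ⟨s, -, h, hH, -, hha, -⟩ | ⟨hfa, -⟩ | ⟨-, rfl⟩ | haX
  · exact absurd hpa.symm (hF.ns_ne_as p (hM hp))
  · exact absurd hha.symm (hF.ps_ne_as h hH)
  · exact absurd hfa.symm hF.fail_ne_as
  · exact hneg failA rfl
  · exact absurd (hX haX).1 hF.as_not_mem

theorem sigMap_ps_mem_iff (hF : FreshSignatures P ps ns failA asA) (hM : M ⊆ heads P)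
    (hX : X ⊆ progAtoms P \ heads P) (hN : isAnswerSet (checkASInput P ps ns failA asA M X) N)
    (ha : a ∈ progAtoms P) : sigMap P ps a ∈ N ↔ a ∈ decodePos P ps N ∪ X := by
  by_cases hH : a ∈ heads P
  · have haX : a ∉ X := fun haX => (hX haX).2 hH
    simp [sigMap_of_mem hH, decodePos, hH, haX]
  · simp [sigMap_of_not_mem hH, decodePos, hH, mem_iff_mem_of_mem_progAtoms hF hM hN ha]

theorem sigMap_ns_mem_iff (hF : FreshSignatures P ps ns failA asA) (hM : M ⊆ heads P)
    (hX : X ⊆ progAtoms P \ heads P) (hN : isAnswerSet (checkASInput P ps ns failA asA M X) N)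
    (ha : a ∈ progAtoms P) : sigMap P ns a ∈ N ↔ a ∈ M ∪ X := by
  by_cases hH : a ∈ heads P
  · have haX : a ∉ X := fun haX => (hX haX).2 hH
    simp [sigMap_of_mem hH, ns_mem_iff hF hM hX hN hH, haX]
  · have haM : a ∉ M := fun haM => hH (hM haM)
    simp [sigMap_of_not_mem hH, haM, mem_iff_mem_of_mem_progAtoms hF hM hN ha]

theorem image_pos_subset_iff (hF : FreshSignatures P ps ns failA asA) (hM : M ⊆ heads P)
    (hX : X ⊆ progAtoms P \ heads P) (hN : isAnswerSet (checkASInput P ps ns failA asA M X) N)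
    (hs : s ∈ P) : sigMap P ps '' s.pos ⊆ N ↔ s.pos ⊆ decodePos P ps N ∪ X := by
  rw [Set.image_subset_iff]
  exact forall₂_congr fun a ha =>
    sigMap_ps_mem_iff hF hM hX hN (mem_progAtoms_of_mem_pos hs ha)

theorem image_neg_not_mem_iff (hF : FreshSignatures P ps ns failA asA) (hM : M ⊆ heads P)
    (hX : X ⊆ progAtoms P \ heads P) (hN : isAnswerSet (checkASInput P ps ns failA asA M X) N)
    (hs : s ∈ P) : (∀ b ∈ sigMap P ns '' s.neg, b ∉ N) ↔ ∀ a ∈ s.neg, a ∉ M ∪ X := by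
  rw [Set.forall_mem_image]
  exact forall₂_congr fun a ha =>
    not_congr (sigMap_ns_mem_iff hF hM hX hN (mem_progAtoms_of_mem_neg hs ha))

theorem reductClosed_decodePos (hF : FreshSignatures P ps ns failA asA) (hM : M ⊆ heads P)
    (hX : X ⊆ progAtoms P \ heads P) (hN : isAnswerSet (checkASInput P ps ns failA asA M X) N) :
    ReductClosed (P ∪ fixProg (progAtoms P \ heads P) X) (M ∪ X) (decodePos P ps N ∪ X) := by
  rintro s (hs | ⟨a, ha, rfl⟩ | ⟨a, -, rfl⟩) hneg hpos h hsh
  · have hH : h ∈ heads P := ⟨s, hs, hsh⟩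
    have hmem : (⟨s.head.map (sigMap P ps), sigMap P ps '' s.pos, sigMap P ns '' s.neg⟩ :
        ARule α) ∈ checkASInput P ps ns failA asA M X :=
      Or.inl (Or.inl (Or.inl (Or.inl (Or.inr ⟨s, hs, by simp [hsh], rfl⟩))))
    have hder := hN.mem_of_bodyTrue (a := ps h) hmem (by simp [hsh, sigMap_of_mem hH])
      ⟨(image_pos_subset_iff hF hM hX hN hs).2 hpos, (image_neg_not_mem_iff hF hM hX hN hs).2 hneg⟩
    exact Or.inl ⟨hH, hder⟩
  · exact Or.inr (Option.some_inj.1 hsh ▸ ha)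
  · cases hsh

/-- An atom of `decodePos P ps N` outside a closed `K` would make its positive copy unfounded. -/
theorem decodePos_union_subset (hF : FreshSignatures P ps ns failA asA) (hM : M ⊆ heads P)
    (hX : X ⊆ progAtoms P \ heads P) (hN : isAnswerSet (checkASInput P ps ns failA asA M X) N)
    (hK : ReductClosed (P ∪ fixProg (progAtoms P \ heads P) X) (M ∪ X) K) :
    decodePos P ps N ∪ X ⊆ K := by
  have hXK : X ⊆ K := fun a ha =>
    hK _ (Or.inr (Or.inl ⟨a, ha, rfl⟩)) (by simp) (Set.empty_subset _) a rfl
  have hU : IsUnfounded (checkASInput P ps ns failA asA M X) N (ps '' (decodePos P ps N \ K)) := by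
    rintro r hr _ ⟨q, ⟨⟨hqH, -⟩, hqK⟩, rfl⟩ hh hneg hpos
    rcases head_cases_of_mem_checkASInput hr hh with
      ⟨p, hp, hqp⟩ | ⟨s, hs, h, hH, hsh, hqh, rfl⟩ | ⟨hq, -⟩ | ⟨hq, -⟩ | hqX
    · exact hF.ps_ne_ns q hqH p (hM hp) hqp
    · obtain rfl := hF.injOn_ps hqH hH hqh
      refine hqK (hK s (Or.inl hs) ((image_neg_not_mem_iff hF hM hX hN hs).1 hneg) ?_ q hsh)
      intro a ha
      have haN : sigMap P ps a ∈ N \ ps '' (decodePos P ps N \ K) := hpos ⟨a, ha, rfl⟩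
      rcases (sigMap_ps_mem_iff hF hM hX hN (mem_progAtoms_of_mem_pos hs ha)).1 haN.1 with
        haT | haX
      · by_contra haK
        exact haN.2 ⟨a, ⟨haT, haK⟩, (sigMap_of_mem haT.1).symm⟩
      · exact hXK haX
    · exact hF.ps_ne_fail q hqH hq
    · exact hF.ps_ne_as q hqH hq
    · exact hF.ps_not_mem q hqH (hX hqX).1
  refine Set.union_subset (fun q hq => ?_) hXK
  by_contra hqK
  exact Set.disjoint_left.1 (hN.disjoint_of_isUnfounded hU) hq.2 ⟨q, ⟨hq, hqK⟩, rfl⟩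

theorem isLeast_decodePos (hF : FreshSignatures P ps ns failA asA) (hM : M ⊆ heads P)
    (hX : X ⊆ progAtoms P \ heads P) (hN : isAnswerSet (checkASInput P ps ns failA asA M X) N) :
    IsLeast {K | ReductClosed (P ∪ fixProg (progAtoms P \ heads P) X) (M ∪ X) K}
      (decodePos P ps N ∪ X) :=
  ⟨reductClosed_decodePos hF hM hX hN, fun _ hK => decodePos_union_subset hF hM hX hN hK⟩

theorem decodePos_eq_of_fail_not_mem (hF : FreshSignatures P ps ns failA asA) (hM : M ⊆ heads P)
    (hX : X ⊆ progAtoms P \ heads P) (hN : isAnswerSet (checkASInput P ps ns failA asA M X) N)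
    (hf : failA ∉ N) : decodePos P ps N = M := by
  ext p
  constructor
  · rintro ⟨hH, hpN⟩
    by_contra hpM
    refine hf (hN.mem_of_bodyTrue (Or.inl (Or.inl (Or.inr ⟨p, hH, Or.inl rfl⟩))) rfl ⟨?_, ?_⟩)
    · simpa using hpN
    · simpa [ns_mem_iff hF hM hX hN hH] using hpM
  · intro hpM
    by_contra hpT
    refine hf (hN.mem_of_bodyTrue (Or.inl (Or.inl (Or.inr ⟨p, hM hpM, Or.inr rfl⟩))) rfl ⟨?_, ?_⟩)
    · simpa using (ns_mem_iff hF hM hX hN (hM hpM)).2 hpM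
    · simpa [decodePos, hM hpM] using hpT

theorem constraintsHold_of_fail_not_mem (hF : FreshSignatures P ps ns failA asA) (hM : M ⊆ heads P)
    (hX : X ⊆ progAtoms P \ heads P) (hN : isAnswerSet (checkASInput P ps ns failA asA M X) N)
    (hf : failA ∉ N) : ConstraintsHold P (M ∪ X) := by
  intro s hs hnone ⟨hsp, hsn⟩
  refine hf (hN.mem_of_bodyTrue (Or.inl (Or.inl (Or.inl (Or.inr ⟨s, hs, hnone, rfl⟩)))) rfl
    ⟨?_, (image_neg_not_mem_iff hF hM hX hN hs).2 hsn⟩)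
  rw [image_pos_subset_iff hF hM hX hN hs, decodePos_eq_of_fail_not_mem hF hM hX hN hf]
  exact hsp

theorem fail_not_mem_of_decodePos_eq (hF : FreshSignatures P ps ns failA asA) (hM : M ⊆ heads P)
    (hX : X ⊆ progAtoms P \ heads P) (hN : isAnswerSet (checkASInput P ps ns failA asA M X) N)
    (hT : decodePos P ps N = M) (hC : ConstraintsHold P (M ∪ X)) : failA ∉ N := by
  have hU : IsUnfounded (checkASInput P ps ns failA asA M X) N {failA} := by
    rintro r hr _ rfl hh hrn hrp
    rcases head_cases_of_mem_checkASInput hr hh with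
      ⟨p, hp, hfp⟩ | ⟨s, -, h, hH, -, hfh, -⟩ |
        ⟨-, ⟨s, hs, hnone, rfl⟩ | ⟨p, hp, rfl | rfl⟩⟩ | ⟨hfa, -⟩ | hfX
    · exact hF.ns_ne_fail p (hM hp) hfp.symm
    · exact hF.ps_ne_fail h hH hfh.symm
    · refine hC s hs hnone ⟨?_, (image_neg_not_mem_iff hF hM hX hN hs).1 hrn⟩
      rw [← hT]
      exact (image_pos_subset_iff hF hM hX hN hs).1 (hrp.trans Set.sdiff_subset)
    · have hpT : p ∈ decodePos P ps N := ⟨hp, (hrp rfl).1⟩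
      exact hrn _ rfl ((ns_mem_iff hF hM hX hN hp).2 (hT ▸ hpT))
    · have hpM := (ns_mem_iff hF hM hX hN hp).1 (hrp rfl).1
      exact hrn _ rfl (hT ▸ hpM : p ∈ decodePos P ps N).2
    · exact hF.fail_ne_as hfa
    · exact hF.fail_not_mem (hX hfX).1
  exact fun hf => Set.disjoint_left.1 (hN.disjoint_of_isUnfounded hU) hf rfl

theorem fail_not_mem_iff (hF : FreshSignatures P ps ns failA asA) (hM : M ⊆ heads P)
    (hX : X ⊆ progAtoms P \ heads P) (hN : isAnswerSet (checkASInput P ps ns failA asA M X) N) :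
    failA ∉ N ↔ decodePos P ps N = M ∧ ConstraintsHold P (M ∪ X) :=
  ⟨fun hf => ⟨decodePos_eq_of_fail_not_mem hF hM hX hN hf,
      constraintsHold_of_fail_not_mem hF hM hX hN hf⟩,
    fun ⟨hT, hC⟩ => fail_not_mem_of_decodePos_eq hF hM hX hN hT hC⟩

end checkAS

theorem checkAS_correct_general {α : Type} (P : AProgram α)
    (ps ns : α → α) (failA asA : α) (M : Set α)
    (hpsInj : Set.InjOn ps (heads P)) (hnsInj : Set.InjOn ns (heads P))
    (hfresh : ∀ p ∈ heads P,
      ps p ∉ progAtoms P ∧ ns p ∉ progAtoms P ∧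
      ps p ≠ failA ∧ ps p ≠ asA ∧ ns p ≠ failA ∧ ns p ≠ asA)
    (hdisj : ∀ p ∈ heads P, ∀ q ∈ heads P, ps p ≠ ns q)
    (hfail : failA ∉ progAtoms P) (has : asA ∉ progAtoms P) (hfa : failA ≠ asA)
    (hM : M ⊆ heads P) :
    ∀ X ⊆ progAtoms P \ heads P, ∀ N,
      isAnswerSet (checkAS P ps ns failA asA M ∪ fixProg (progAtoms P \ heads P) X) N →
        (asA ∈ N ↔ isAnswerSet (P ∪ fixProg (progAtoms P \ heads P) X) (M ∪ X)) := by
  intro X hX N hN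
  have hF : checkAS.FreshSignatures P ps ns failA asA :=
    ⟨hpsInj, hnsInj, fun p hp => (hfresh p hp).1, fun p hp => (hfresh p hp).2.1,
      fun p hp => (hfresh p hp).2.2.1, fun p hp => (hfresh p hp).2.2.2.1,
      fun p hp => (hfresh p hp).2.2.2.2.1, fun p hp => (hfresh p hp).2.2.2.2.2,
      hdisj, hfail, has, hfa⟩
  have hXH : ∀ a ∈ X, a ∉ heads P := fun a ha => (hX ha).2
  have hdisjX : ∀ {S}, S ⊆ heads P → Disjoint S X := fun hS =>
    Set.disjoint_left.2 fun a haS haX => hXH a haX (hS haS)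
  have hcancel : M ∪ X = checkAS.decodePos P ps N ∪ X ↔ checkAS.decodePos P ps N = M := by
    refine ⟨fun h => ?_, fun h => h ▸ rfl⟩
    calc checkAS.decodePos P ps N = (checkAS.decodePos P ps N ∪ X) \ X :=
          ((hdisjX fun _ hp => hp.1).sup_sdiff_cancel_right).symm
      _ = (M ∪ X) \ X := by rw [h]
      _ = M := (hdisjX hM).sup_sdiff_cancel_right
  have hfixed : ∀ a ∈ (progAtoms P \ heads P) \ X, a ∉ M ∪ X := fun a ha haMX =>
    ha.2 (haMX.resolve_left fun haM => ha.1.2 (hM haM))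
  rw [checkAS.as_mem_iff hF hM hX hN, checkAS.fail_not_mem_iff hF hM hX hN,
    isAnswerSet_iff_of_isLeast (checkAS.isLeast_decodePos hF hM hX hN), hcancel,
    constraintsHold_union_fixProg hfixed]

/-- checkAS correctness: for every interpretation `X` of the
non-head atoms and every answer set `N` of `checkAS(P,M)` together with the
input `X` fixed, `as_M ∈ N` iff `M ∪ X` is an answer set of `P ∪ fix(X)`. -/
theorem checkAS_correct {α : Type} (P : AProgram α) (hfin : P.Finite)
    (ps ns : α → α) (failA asA : α) (M : Set α)
    (hpsInj : Set.InjOn ps (heads P)) (hnsInj : Set.InjOn ns (heads P))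
    (hfresh : ∀ p ∈ heads P,
      ps p ∉ progAtoms P ∧ ns p ∉ progAtoms P ∧
      ps p ≠ failA ∧ ps p ≠ asA ∧ ns p ≠ failA ∧ ns p ≠ asA)
    (hdisj : ∀ p ∈ heads P, ∀ q ∈ heads P, ps p ≠ ns q)
    (hfail : failA ∉ progAtoms P) (has : asA ∉ progAtoms P) (hfa : failA ≠ asA)
    (hM : M ⊆ heads P) :
    ∀ X ⊆ progAtoms P \ heads P, ∀ N,
      isAnswerSet (checkAS P ps ns failA asA M ∪ fixProg (progAtoms P \ heads P) X) N →
        (asA ∈ N ↔ isAnswerSet (P ∪ fixProg (progAtoms P \ heads P) X) (M ∪ X)) :=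
  checkAS_correct_general P ps ns failA asA M hpsInj hnsInj hfresh hdisj hfail has hfa hM
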